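/- arXiv:1809.01513 — 2 statements merged into one kernel-verified Lean document; each statement's English description precedes it below -/
import Mathlib

section
/- Let g : ℝ^d → ℝ be strictly convex, differentiable, and coercive (g(x) → +∞ as |x| → ∞). Then for every compact set K ⊆ ℝ^d there exists a strictly increasing function ω : [0,∞) → [0,∞) with ω(0) = 0 and ω(t) > 0 for t > 0, such that g(y) - g(x) - ⟨Dg(x), y - x⟩ ≥ ω(|y - x|) for all x, y ∈ K. -/
/-!
The Bregman divergence `g y - g x - Dg(x)(y - x)` dominates the midpoint defect
`g x + g y - 2 g ((x + y) / 2)`, by the gradient inequality at `x` towards the midpoint. The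
midpoint defect is continuous and, by strict convexity, positive off the diagonal, so by
compactness its infimum over the pairs of `K` at distance at least `t` is a monotone function
`m` with `m t > 0` for `t > 0`. Then `ω t = t / (1 + t) * m t` is a strictly increasing modulus.
-/

open Set Function

theorem exists_strictMonoOn_le_of_monotone {m : ℝ → ℝ} (hm : Monotone m) (hm0 : ∀ t, 0 ≤ m t)
    (hpos : ∀ t, 0 < t → 0 < m t) :
    ∃ ω : ℝ → ℝ, StrictMonoOn ω (Ici 0) ∧ ω 0 = 0 ∧ (∀ t, 0 < t → 0 < ω t) ∧
      (∀ t, 0 ≤ t → 0 ≤ ω t) ∧ ∀ t, 0 ≤ t → ω t ≤ m t := by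
  refine ⟨fun t => t / (1 + t) * m t, ?_, by simp, fun t ht => by have := hpos t ht; positivity,
    fun t ht => by have := hm0 t; positivity, fun t ht => ?_⟩
  · intro s (hs : 0 ≤ s) t (ht : 0 ≤ t) hst
    have hfac : s / (1 + s) < t / (1 + t) := by
      rw [div_lt_div_iff₀ (by positivity) (by positivity)]
      linarith
    calc s / (1 + s) * m s ≤ s / (1 + s) * m t := by gcongr; exact hm hst.le
      _ < t / (1 + t) * m t := by gcongr; exact hpos t (hs.trans_lt hst)
  · have hfac : t / (1 + t) ≤ 1 := (div_le_one (by positivity)).2 (by linarith)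
    simpa using mul_le_mul_of_nonneg_right hfac (hm0 t)

section Modulus

variable {X : Type*} [PseudoMetricSpace X]

/-- The `1` is inserted so that the infimum stays positive when no pair of `K` is `t` apart
(`sInf ∅ = 0` in `ℝ`). -/
noncomputable def separationInf (F : X → X → ℝ) (K : Set X) (t : ℝ) : ℝ :=
  sInf (insert 1 (uncurry F '' {p ∈ K ×ˢ K | t ≤ dist p.1 p.2}))

variable {F : X → X → ℝ} {K : Set X}

theorem zero_mem_lowerBounds_separationInf_set (hF : ∀ x ∈ K, ∀ y ∈ K, 0 ≤ F x y) (t : ℝ) :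
    0 ∈ lowerBounds (insert 1 (uncurry F '' {p ∈ K ×ˢ K | t ≤ dist p.1 p.2})) := by
  rintro b (rfl | ⟨p, ⟨⟨hp₁, hp₂⟩, -⟩, rfl⟩)
  · exact zero_le_one
  · exact hF _ hp₁ _ hp₂

theorem separationInf_nonneg (hF : ∀ x ∈ K, ∀ y ∈ K, 0 ≤ F x y) (t : ℝ) :
    0 ≤ separationInf F K t :=
  le_csInf (insert_nonempty _ _) (zero_mem_lowerBounds_separationInf_set hF t)

theorem monotone_separationInf (hF : ∀ x ∈ K, ∀ y ∈ K, 0 ≤ F x y) :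
    Monotone (separationInf F K) := fun _ _ hst =>
  csInf_le_csInf ⟨0, zero_mem_lowerBounds_separationInf_set hF _⟩ (insert_nonempty _ _)
    (insert_subset_insert (image_mono fun _ hp => ⟨hp.1, hst.trans hp.2⟩))

theorem separationInf_le (hF : ∀ x ∈ K, ∀ y ∈ K, 0 ≤ F x y) {x y : X} (hx : x ∈ K)
    (hy : y ∈ K) : separationInf F K (dist x y) ≤ F x y :=
  csInf_le ⟨0, zero_mem_lowerBounds_separationInf_set hF _⟩
    (mem_insert_of_mem _ ⟨(x, y), ⟨⟨hx, hy⟩, le_rfl⟩, rfl⟩)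

theorem separationInf_pos (hK : IsCompact K) (hFc : ContinuousOn (uncurry F) (K ×ˢ K))
    (hF : ∀ x ∈ K, ∀ y ∈ K, x ≠ y → 0 < F x y) {t : ℝ} (ht : 0 < t) :
    0 < separationInf F K t := by
  set S := {p ∈ K ×ˢ K | t ≤ dist p.1 p.2}
  rcases S.eq_empty_or_nonempty with hS | hS
  · change 0 < sInf (insert 1 (uncurry F '' S))
    simp [hS]
  have hSc : IsCompact S :=
    (hK.prod hK).inter_right (isClosed_le continuous_const continuous_dist)
  obtain ⟨p, ⟨⟨hp₁, hp₂⟩, hpt⟩, hmin⟩ := hSc.exists_isMinOn hS (hFc.mono inter_subset_left)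
  have hne : p.1 ≠ p.2 := fun h => by
    rw [h, dist_self] at hpt
    exact ht.not_ge hpt
  refine (lt_min one_pos (hF _ hp₁ _ hp₂ hne)).trans_le (le_csInf (insert_nonempty _ _) ?_)
  rintro b (rfl | ⟨q, hq, rfl⟩)
  · exact min_le_left _ _
  · exact (min_le_right _ _).trans (hmin hq)

theorem exists_modulus_of_isCompact (hK : IsCompact K)
    (hFc : ContinuousOn (uncurry F) (K ×ˢ K)) (hF0 : ∀ x ∈ K, ∀ y ∈ K, 0 ≤ F x y)
    (hF : ∀ x ∈ K, ∀ y ∈ K, x ≠ y → 0 < F x y) :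
    ∃ ω : ℝ → ℝ, StrictMonoOn ω (Ici 0) ∧ ω 0 = 0 ∧ (∀ t, 0 < t → 0 < ω t) ∧
      (∀ t, 0 ≤ t → 0 ≤ ω t) ∧ ∀ x ∈ K, ∀ y ∈ K, ω (dist x y) ≤ F x y := by
  obtain ⟨ω, hmono, h0, hpos, hnn, hle⟩ := exists_strictMonoOn_le_of_monotone
    (monotone_separationInf hF0) (separationInf_nonneg hF0) (fun _ => separationInf_pos hK hFc hF)
  exact ⟨ω, hmono, h0, hpos, hnn, fun x hx y hy =>
    (hle _ dist_nonneg).trans (separationInf_le hF0 hx hy)⟩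

end Modulus

section Convex

variable {E : Type*} [NormedAddCommGroup E] [NormedSpace ℝ E] {f : E → ℝ} {s : Set E}

theorem ConvexOn.fderiv_apply_sub_le (hf : ConvexOn ℝ s f) {x y : E} (hx : x ∈ s) (hy : y ∈ s)
    (hfx : DifferentiableAt ℝ f x) : fderiv ℝ f x (y - x) ≤ f y - f x := by
  have hline : ConvexOn ℝ (AffineMap.lineMap x y ⁻¹' s) (f ∘ AffineMap.lineMap x y) :=
    hf.comp_affineMap _
  have hfx₀ : HasFDerivAt f (fderiv ℝ f x) (AffineMap.lineMap x y (0 : ℝ)) := by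
    simpa using hfx.hasFDerivAt
  have hderiv : HasDerivAt (f ∘ AffineMap.lineMap (k := ℝ) x y) (fderiv ℝ f x (y - x)) 0 :=
    hfx₀.comp_hasDerivAt 0 AffineMap.hasDerivAt_lineMap
  simpa [slope] using hline.le_slope_of_hasDerivAt (by simpa) (by simpa) one_pos hderiv

/-- Unlike the Bregman divergence of `f`, this is continuous as soon as `f` is. -/
noncomputable def midpointDefect (f : E → ℝ) (x y : E) : ℝ :=
  f x + f y - 2 * f ((2⁻¹ : ℝ) • x + (2⁻¹ : ℝ) • y)

theorem Continuous.continuous_midpointDefect (hf : Continuous f) :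
    Continuous (uncurry (midpointDefect f)) := by
  unfold midpointDefect uncurry
  fun_prop

theorem ConvexOn.midpointDefect_nonneg (hf : ConvexOn ℝ s f) {x y : E} (hx : x ∈ s)
    (hy : y ∈ s) : 0 ≤ midpointDefect f x y := by
  have := hf.2 hx hy (by norm_num : (0 : ℝ) ≤ 2⁻¹) (by norm_num : (0 : ℝ) ≤ 2⁻¹) (by norm_num)
  simp only [smul_eq_mul] at this
  unfold midpointDefect
  linarith

theorem StrictConvexOn.midpointDefect_pos (hf : StrictConvexOn ℝ s f) {x y : E} (hx : x ∈ s)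
    (hy : y ∈ s) (hxy : x ≠ y) : 0 < midpointDefect f x y := by
  have := hf.2 hx hy hxy (by norm_num : (0 : ℝ) < 2⁻¹) (by norm_num : (0 : ℝ) < 2⁻¹) (by norm_num)
  simp only [smul_eq_mul] at this
  unfold midpointDefect
  linarith

theorem ConvexOn.midpointDefect_le (hf : ConvexOn ℝ s f) (hs : Convex ℝ s) {x y : E}
    (hx : x ∈ s) (hy : y ∈ s) (hfx : DifferentiableAt ℝ f x) :
    midpointDefect f x y ≤ f y - f x - fderiv ℝ f x (y - x) := by
  unfold midpointDefect
  set z := (2⁻¹ : ℝ) • x + (2⁻¹ : ℝ) • y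
  have hz : z ∈ s := hs hx hy (by norm_num) (by norm_num) (by norm_num)
  have hzx : z - x = (2⁻¹ : ℝ) • (y - x) := by module
  have := hf.fderiv_apply_sub_le hx hz hfx
  rw [hzx, map_smul, smul_eq_mul] at this
  linarith

end Convex

theorem stmt_10_general {d : ℕ} (g : EuclideanSpace ℝ (Fin d) → ℝ)
    (hconv : StrictConvexOn ℝ Set.univ g) (hdiff : Differentiable ℝ g)
    (K : Set (EuclideanSpace ℝ (Fin d))) (hK : IsCompact K) :
    ∃ ω : ℝ → ℝ, StrictMonoOn ω (Set.Ici 0) ∧ ω 0 = 0 ∧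
      (∀ t : ℝ, 0 < t → 0 < ω t) ∧ (∀ t : ℝ, 0 ≤ t → 0 ≤ ω t) ∧
      ∀ x ∈ K, ∀ y ∈ K, ω ‖y - x‖ ≤ g y - g x - fderiv ℝ g x (y - x) := by
  obtain ⟨ω, hmono, hω0, hpos, hnonneg, hle⟩ := exists_modulus_of_isCompact hK
    hdiff.continuous.continuous_midpointDefect.continuousOn
    (fun x _ y _ => hconv.convexOn.midpointDefect_nonneg (mem_univ x) (mem_univ y))
    (fun x _ y _ => hconv.midpointDefect_pos (mem_univ x) (mem_univ y))
  refine ⟨ω, hmono, hω0, hpos, hnonneg, fun x hx y hy => ?_⟩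
  rw [← dist_eq_norm, dist_comm]
  exact (hle x hx y hy).trans
    (hconv.convexOn.midpointDefect_le convex_univ (mem_univ x) (mem_univ y) (hdiff x))

theorem stmt_10 {d : ℕ} (g : EuclideanSpace ℝ (Fin d) → ℝ)
    (hconv : StrictConvexOn ℝ Set.univ g) (hdiff : Differentiable ℝ g)
    (hcoerc : Filter.Tendsto g (Filter.cocompact _) Filter.atTop)
    (K : Set (EuclideanSpace ℝ (Fin d))) (hK : IsCompact K) :
    ∃ ω : ℝ → ℝ, StrictMonoOn ω (Set.Ici 0) ∧ ω 0 = 0 ∧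
      (∀ t : ℝ, 0 < t → 0 < ω t) ∧ (∀ t : ℝ, 0 ≤ t → 0 ≤ ω t) ∧
      ∀ x ∈ K, ∀ y ∈ K, ω ‖y - x‖ ≤ g y - g x - fderiv ℝ g x (y - x) :=
  stmt_10_general g hconv hdiff K hK
end

section
/- Let V be a real vector space, Q : V × V → ℝ a symmetric bilinear form, ℓ : V → ℝ a linear functional, and V₁, V₂ ⊆ V subspaces with Q(v₁, v₂) = 0 for all v₁ ∈ V₁, v₂ ∈ V₂. Suppose Q(v, v) ≥ 0 for every v ∈ V₁ + V₂ with ℓ(v) = 0. Then Q(v, v) ≥ 0 for all v ∈ V₁, or Q(v, v) ≥ 0 for all v ∈ V₂. -/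
theorem stmt_11 {V : Type*} [AddCommGroup V] [Module ℝ V]
    (Q : V →ₗ[ℝ] V →ₗ[ℝ] ℝ) (hQsymm : ∀ u v, Q u v = Q v u)
    (ℓ : V →ₗ[ℝ] ℝ) (V₁ V₂ : Submodule ℝ V)
    (horth : ∀ v₁ ∈ V₁, ∀ v₂ ∈ V₂, Q v₁ v₂ = 0)
    (hstab : ∀ v ∈ V₁ ⊔ V₂, ℓ v = 0 → 0 ≤ Q v v) :
    (∀ v ∈ V₁, 0 ≤ Q v v) ∨ (∀ v ∈ V₂, 0 ≤ Q v v) := by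
  by_contra h
  push_neg at h
  obtain ⟨⟨v₁, hv₁, hQ1⟩, ⟨v₂, hv₂, hQ2⟩⟩ := h
  have h1 : v₁ ∈ V₁ ⊔ V₂ := Submodule.mem_sup_left hv₁
  have h2 : v₂ ∈ V₁ ⊔ V₂ := Submodule.mem_sup_right hv₂
  have hl1 : ℓ v₁ ≠ 0 := fun h0 => absurd (hstab v₁ h1 h0) (not_le.mpr hQ1)
  have hl2 : ℓ v₂ ≠ 0 := fun h0 => absurd (hstab v₂ h2 h0) (not_le.mpr hQ2)
  set v : V := (ℓ v₂) • v₁ - (ℓ v₁) • v₂ with hv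
  have hvmem : v ∈ V₁ ⊔ V₂ :=
    Submodule.sub_mem _ (Submodule.mem_sup_left (V₁.smul_mem _ hv₁))
      (Submodule.mem_sup_right (V₂.smul_mem _ hv₂))
  have hlv : ℓ v = 0 := by simp [hv, mul_comm]
  have hcross : Q v₁ v₂ = 0 := horth v₁ hv₁ v₂ hv₂
  have hcross' : Q v₂ v₁ = 0 := by rw [hQsymm]; exact hcross
  have hQv : Q v v = (ℓ v₂)^2 * Q v₁ v₁ + (ℓ v₁)^2 * Q v₂ v₂ := by
    simp [hv, map_sub, map_smul, hcross, hcross']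
    ring
  have : 0 ≤ Q v v := hstab v hvmem hlv
  rw [hQv] at this
  nlinarith [pow_pos (abs_pos.mpr hl1) 2, sq_abs (ℓ v₁), pow_pos (abs_pos.mpr hl2) 2, sq_abs (ℓ v₂)]
end
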